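/- For every μ ∈ ℝ there exists a constant C(μ) > 0 such that for all integers n ≥ 1 with 1 − μ/√n ≥ 0, the total mass of the weighted half-space kernel with reflection rate γ = 1 − μ/√n satisfies ∑_{x ∈ ℤ_{≥0}} p_{1−μ/√n}(n, 0, x) ≤ C(μ). (Equivalently, E[(1 − μ/√n)^{N_n}] is bounded uniformly in n, where N_n is the number of visits to 0 up to time n of the reflected simple random walk started at 0.) -/

import Mathlib

open MeasureTheory Real

/-- A reflecting path of length `n` on `ℤ_{≥0}`: nearest-neighbour steps away from `0`,
and a forced step `0 → 1` from the origin. -/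
def IsReflPath (n : ℕ) (S : Fin (n + 1) → ℕ) : Prop :=
  ∀ i : Fin n,
    (1 ≤ S i.castSucc → (S i.succ = S i.castSucc + 1 ∨ S i.succ + 1 = S i.castSucc)) ∧
    (S i.castSucc = 0 → S i.succ = 1)

/-- The step weight `w(S) = ∏_{i=0}^{n-1} q(S_i)` with `q(0) = 1`, `q(z) = 1/2` for `z ≥ 1`. -/
noncomputable def pathWeight (n : ℕ) (S : Fin (n + 1) → ℕ) : ℝ :=
  ∏ i : Fin n, if S i.castSucc = 0 then (1 : ℝ) else (1 / 2 : ℝ)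

/-- The number of visits to the origin `#{0 ≤ i ≤ n : S_i = 0}`. -/
def numZeros (n : ℕ) (S : Fin (n + 1) → ℕ) : ℕ :=
  (Finset.univ.filter (fun i : Fin (n + 1) => S i = 0)).card

/-- The reflecting paths of length `n` from `x` to `y`. -/
def ReflPaths (n x y : ℕ) : Set (Fin (n + 1) → ℕ) :=
  {S | S 0 = x ∧ S (Fin.last n) = y ∧ IsReflPath n S}

/-- The weighted half-space transition kernel
`p_γ(n,x,y) = ∑_S γ^{#{0 ≤ i ≤ n : S_i = 0}} w(S)`, summing over reflecting paths of
length `n` from `x` to `y`. -/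
noncomputable def pGamma (γ : ℝ) (n x y : ℕ) : ℝ :=
  ∑' S : ReflPaths n x y, γ ^ numZeros n S.1 * pathWeight n S.1

/-!
Write `b = |μ|/√n`, so that `γ = 1 - μ/√n ≤ 1 + b`. The total mass is the weighted path sum
`∑_S ∏_{i<n} γ^[S_i = 0] q(S_i) · ψ(S_n)` with `ψ 0 = γ`, `ψ = 1` elsewhere, and it satisfies the
one-step recursion of the reflected walk. Hence any `φ ≥ ψ` with `γ φ(1) ≤ c φ(0)` and
`φ(x+1) + φ(x-1) ≤ 2c φ(x)` for `x ≥ 1` bounds it by `c^n φ(0)`. The choice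
`φ(x) = cosh(2bx - D)`, `D = 1 + |μ|`, `c = cosh 2b` is an exact eigenfunction in the bulk, and
the boundary inequality holds because the extra weight `γ - 1 ≤ b` at the origin is paid for by
`sinh 2b ≥ 2b`. Finally `cosh(2b)^n ≤ exp(2nb²) = exp(2μ²)`.
-/

open Finset

def reflNeighbors (x : ℕ) : Finset ℕ := if x = 0 then {1} else {x + 1, x - 1}

lemma mem_reflNeighbors {x y : ℕ} :
    y ∈ reflNeighbors x ↔ (1 ≤ x → (y = x + 1 ∨ y + 1 = x)) ∧ (x = 0 → y = 1) := by
  rcases x with _ | x <;> simp [reflNeighbors]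

lemma isReflPath_cons {n x : ℕ} {T : Fin (n + 1) → ℕ} :
    IsReflPath (n + 1) (Fin.cons x T) ↔ T 0 ∈ reflNeighbors x ∧ IsReflPath n T := by
  rw [mem_reflNeighbors]
  constructor
  · intro h
    exact ⟨by simpa using h 0, fun j => by simpa [← Fin.succ_castSucc] using h j.succ⟩
  · rintro ⟨h0, hT⟩ i
    refine Fin.cases (by simpa using h0) (fun j => ?_) i
    simpa [← Fin.succ_castSucc] using hT j

def reflPathsFrom : (n x : ℕ) → Finset (Fin (n + 1) → ℕ)
  | 0, x => {fun _ => x}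
  | n + 1, x => (reflNeighbors x).biUnion fun y => (reflPathsFrom n y).image (Fin.cons x)

lemma mem_reflPathsFrom {n x : ℕ} {S : Fin (n + 1) → ℕ} :
    S ∈ reflPathsFrom n x ↔ S 0 = x ∧ IsReflPath n S := by
  induction n generalizing x with
  | zero =>
    simp [reflPathsFrom, funext_iff, Fin.forall_fin_one, IsReflPath]
  | succ n ih =>
    simp only [reflPathsFrom, mem_biUnion, mem_image, ih]
    constructor
    · rintro ⟨y, hy, T, ⟨rfl, hT⟩, rfl⟩
      exact ⟨rfl, isReflPath_cons.2 ⟨hy, hT⟩⟩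
    · rintro ⟨rfl, hS⟩
      rw [← Fin.cons_self_tail S, isReflPath_cons] at hS
      exact ⟨_, hS.1, Fin.tail S, ⟨rfl, hS.2⟩, Fin.cons_self_tail S⟩

/-- `γ ^ [x = 0] * q x`: the weight a path collects for one step out of `x`. -/
noncomputable def stepFactor (γ : ℝ) (x : ℕ) : ℝ := if x = 0 then γ else 1 / 2

noncomputable def pathSum (γ : ℝ) (φ : ℕ → ℝ) (n x : ℕ) : ℝ :=
  ∑ S ∈ reflPathsFrom n x, (∏ i : Fin n, stepFactor γ (S i.castSucc)) * φ (S (Fin.last n))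

lemma pathSum_zero (γ : ℝ) (φ : ℕ → ℝ) (x : ℕ) : pathSum γ φ 0 x = φ x := by
  simp [pathSum, reflPathsFrom]

lemma pathSum_succ (γ : ℝ) (φ : ℕ → ℝ) (n x : ℕ) :
    pathSum γ φ (n + 1) x = stepFactor γ x * ∑ y ∈ reflNeighbors x, pathSum γ φ n y := by
  rw [pathSum, reflPathsFrom, sum_biUnion, mul_sum]
  · refine sum_congr rfl fun y _ => ?_
    rw [sum_image, pathSum, mul_sum]
    · refine sum_congr rfl fun T _ => ?_
      rw [Fin.prod_univ_succ, ← Fin.succ_last]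
      simp only [Fin.castSucc_zero, Fin.cons_zero, ← Fin.succ_castSucc, Fin.cons_succ]
      ring
    · exact fun T _ T' _ h => Fin.cons_right_injective (α := fun _ => ℕ) x h
  · intro y _ z _ hyz
    refine disjoint_left.2 fun S hSy hSz => hyz ?_
    obtain ⟨T, hT, rfl⟩ := mem_image.1 hSy
    obtain ⟨T', hT', hTT'⟩ := mem_image.1 hSz
    rw [← (mem_reflPathsFrom.1 hT).1, ← (mem_reflPathsFrom.1 hT').1,
      Fin.cons_right_injective (α := fun _ => ℕ) x hTT']

theorem pathSum_le_of_supersolution {γ c : ℝ} {φ ψ : ℕ → ℝ} (hγ : 0 ≤ γ) (hc : 0 ≤ c)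
    (hψ : ψ ≤ φ) (h0 : γ * φ 1 ≤ c * φ 0) (hstep : ∀ x, φ (x + 2) + φ x ≤ 2 * c * φ (x + 1))
    (n x : ℕ) : pathSum γ ψ n x ≤ c ^ n * φ x := by
  induction n generalizing x with
  | zero => simpa [pathSum_zero] using hψ x
  | succ n ih =>
    have hcn : 0 ≤ c ^ n := pow_nonneg hc n
    rcases x with _ | x
    · calc pathSum γ ψ (n + 1) 0 = γ * pathSum γ ψ n 1 := by
            simp [pathSum_succ, reflNeighbors, stepFactor]
        _ ≤ γ * (c ^ n * φ 1) := mul_le_mul_of_nonneg_left (ih 1) hγ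
        _ = c ^ n * (γ * φ 1) := by ring
        _ ≤ c ^ n * (c * φ 0) := mul_le_mul_of_nonneg_left h0 hcn
        _ = c ^ (n + 1) * φ 0 := by ring
    · calc pathSum γ ψ (n + 1) (x + 1) = (pathSum γ ψ n (x + 2) + pathSum γ ψ n x) / 2 := by
            rw [pathSum_succ, reflNeighbors, if_neg x.succ_ne_zero, sum_pair (by omega), stepFactor,
              if_neg x.succ_ne_zero, Nat.add_sub_cancel]
            ring
        _ ≤ (c ^ n * φ (x + 2) + c ^ n * φ x) / 2 := by gcongr <;> apply ih
        _ = c ^ n * (φ (x + 2) + φ x) / 2 := by ring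
        _ ≤ c ^ n * (2 * c * φ (x + 1)) / 2 := by gcongr; exact hstep x
        _ = c ^ (n + 1) * φ (x + 1) := by ring

lemma pow_numZeros_mul_pathWeight (γ : ℝ) (n : ℕ) (S : Fin (n + 1) → ℕ) :
    γ ^ numZeros n S * pathWeight n S =
      (∏ i : Fin n, stepFactor γ (S i.castSucc)) * (if S (Fin.last n) = 0 then γ else 1) := by
  rw [numZeros, ← prod_const, prod_filter, Fin.prod_univ_castSucc, pathWeight, mul_right_comm,
    ← prod_mul_distrib]
  congr 1
  refine prod_congr rfl fun i _ => ?_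
  simp only [stepFactor]
  split_ifs <;> ring

lemma pGamma_eq_sum (γ : ℝ) (n x y : ℕ) :
    pGamma γ n x y = ∑ S ∈ reflPathsFrom n x with S (Fin.last n) = y,
      γ ^ numZeros n S * pathWeight n S := by
  have hpaths : ReflPaths n x y = ↑((reflPathsFrom n x).filter fun S => S (Fin.last n) = y) := by
    ext S
    simp only [ReflPaths, coe_filter, mem_reflPathsFrom, Set.mem_ofPred_eq]
    tauto
  rw [pGamma, hpaths]
  exact Finset.tsum_subtype' _ fun S => γ ^ numZeros n S * pathWeight n S

lemma tsum_pGamma_eq_pathSum (γ : ℝ) (n x : ℕ) :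
    ∑' y, pGamma γ n x y = pathSum γ (fun y => if y = 0 then γ else 1) n x := by
  have hsupp : ∀ y ∉ (reflPathsFrom n x).image (· (Fin.last n)), pGamma γ n x y = 0 := by
    intro y hy
    rw [pGamma_eq_sum]
    refine sum_eq_zero fun S hS => absurd (mem_image.2 ⟨S, ?_⟩) hy
    exact mem_filter.1 hS
  rw [tsum_eq_sum hsupp]
  simp only [pGamma_eq_sum, pow_numZeros_mul_pathWeight]
  exact sum_fiberwise_of_maps_to (fun S hS => mem_image_of_mem _ hS) _

lemma cosh_le_two_mul_sinh {D : ℝ} (hD : 1 ≤ D) : cosh D ≤ 2 * sinh D := by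
  have hexp : exp (-D) ≤ 1 := exp_le_one_iff.2 (by linarith)
  have hsinh : D ≤ sinh D := self_le_sinh_iff.2 (by linarith)
  linarith [cosh_sub_sinh D]

lemma mul_cosh_sub_le {γ b D : ℝ} (hγ : γ ≤ 1 + b) (hb : 0 ≤ b) (hbD : 1 + b ≤ D) :
    γ * cosh (2 * b - D) ≤ cosh (2 * b) * cosh D := by
  have hcosh : cosh (2 * b - D) ≤ cosh D := by
    rw [cosh_le_cosh, abs_of_nonneg (by linarith : 0 ≤ D)]
    exact abs_le.2 ⟨by linarith, by linarith⟩
  have hsinh : 2 * b ≤ sinh (2 * b) := self_le_sinh_iff.2 (by linarith)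
  have hsinhD : 0 ≤ sinh D := sinh_nonneg_iff.2 (by linarith)
  calc γ * cosh (2 * b - D) ≤ (1 + b) * cosh (2 * b - D) :=
        mul_le_mul_of_nonneg_right hγ (cosh_pos _).le
    _ ≤ cosh (2 * b - D) + b * (2 * sinh D) := by
        nlinarith [cosh_le_two_mul_sinh (by linarith : 1 ≤ D)]
    _ ≤ cosh (2 * b - D) + sinh (2 * b) * sinh D := by nlinarith
    _ = cosh (2 * b) * cosh D := by rw [cosh_sub]; ring

theorem tsum_pGamma_zero_le {γ b D : ℝ} (hγ0 : 0 ≤ γ) (hγ : γ ≤ 1 + b) (hb : 0 ≤ b)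
    (hbD : 1 + b ≤ D) (n : ℕ) : ∑' y, pGamma γ n 0 y ≤ cosh (2 * b) ^ n * cosh D := by
  have hψ : (fun y => if y = 0 then γ else 1) ≤ fun x : ℕ => cosh (2 * b * x - D) := by
    intro y
    dsimp only
    split_ifs with hy
    · have hD : D ≤ cosh D := (self_le_sinh_iff.2 (by linarith)).trans (sinh_lt_cosh D).le
      simpa [hy] using (hγ.trans hbD).trans hD
    · exact one_le_cosh _
  have hstep (x : ℕ) : cosh (2 * b * ↑(x + 2) - D) + cosh (2 * b * x - D) ≤
      2 * cosh (2 * b) * cosh (2 * b * ↑(x + 1) - D) := by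
    have e₁ : 2 * b * ↑(x + 2) - D = 2 * b * ↑(x + 1) - D + 2 * b := by push_cast; ring
    have e₂ : 2 * b * x - D = 2 * b * ↑(x + 1) - D - 2 * b := by push_cast; ring
    rw [e₁, e₂]
    generalize 2 * b * ↑(x + 1) - D = u
    exact le_of_eq (by rw [cosh_add, cosh_sub]; ring)
  rw [tsum_pGamma_eq_pathSum]
  simpa using pathSum_le_of_supersolution hγ0 (cosh_pos _).le hψ
    (by simpa using mul_cosh_sub_le hγ hb hbD) hstep n 0

/-- For every `μ ∈ ℝ` there is `C(μ) > 0` such that, uniformly over `n ≥ 1` with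
`1 - μ/√n ≥ 0`, the total mass of the weighted half-space kernel with reflection rate
`γ = 1 - μ/√n` satisfies `∑_{x ≥ 0} p_γ(n,0,x) ≤ C(μ)`. -/
theorem pGamma_total_mass_bounded (μ : ℝ) :
    ∃ C : ℝ, 0 < C ∧ ∀ n : ℕ, 1 ≤ n → 0 ≤ 1 - μ / Real.sqrt n →
      ∑' x : ℕ, pGamma (1 - μ / Real.sqrt n) n 0 x ≤ C := by
  refine ⟨exp (2 * μ ^ 2) * cosh (1 + |μ|), by positivity, fun n hn hγ => ?_⟩
  have hsqrt : 1 ≤ √(n : ℝ) := Real.one_le_sqrt.2 (by exact_mod_cast hn)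
  set b := |μ| / √(n : ℝ) with hb_def
  have hb : 0 ≤ b := by positivity
  have hbμ : b ≤ |μ| := div_le_self (abs_nonneg μ) hsqrt
  have hγb : 1 - μ / √n ≤ 1 + b := by
    have : -μ / √n ≤ b := div_le_div_of_nonneg_right (neg_le_abs μ) (by positivity)
    linarith [neg_div (√(n : ℝ)) μ]
  have hcosh : cosh (2 * b) ^ n ≤ exp (2 * μ ^ 2) := calc
    cosh (2 * b) ^ n ≤ exp ((2 * b) ^ 2 / 2) ^ n :=
      pow_le_pow_left₀ (cosh_pos _).le (cosh_le_exp_half_sq _) n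
    _ = exp (2 * μ ^ 2) := by
      rw [← exp_nat_mul, hb_def, mul_pow, div_pow, sq_abs, sq_sqrt (Nat.cast_nonneg n)]
      field_simp
  calc _ ≤ cosh (2 * b) ^ n * cosh (1 + |μ|) := tsum_pGamma_zero_le hγ hγb hb (by linarith) n
    _ ≤ _ := mul_le_mul_of_nonneg_right hcosh (cosh_pos _).le
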